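/- Let h : [0,1] → ℝ₊ be non-decreasing, right-continuous with h(0) = 0 and ∫₀¹ h(s) ds = 1, and let Z ∈ L¹ be such that s ↦ VaR_s(Z)h(s) is integrable on (0,1). Then the spectral risk measure ρ_h(Z) = ∫₀¹ VaR_s(Z)h(s) ds admits the representation ρ_h(Z) = ∫₀¹ (1−s)·ES_s(Z) dh(s), where the right-hand side is a Riemann–Stieltjes integral with respect to h. -/

import Mathlib

/-!
Since `(1 - s) ES_s(Z) = ∫_{(s,1)} VaR_u(Z) du`, the right-hand side is the integral of
`VaR_u(Z)` over `{(s, u) : 0 < s < u < 1}` against `dh(s) ⊗ du`. Integrating out `s` first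
(Fubini) leaves `∫₀¹ VaR_u(Z) · h((0, u)) du`, and `h((0, u)) = h(u⁻) - h(0) = h(u)` for all but
the countably many jumps of `h`. The map `u ↦ VaR_u(Z)` is measurable because
`s ↦ {z | s ≤ P(Z ≤ z)}` is antitone, so its infimum is monotone except where `sInf` takes a
junk value.
-/

open MeasureTheory

/-- Value-at-Risk at level `s` of the loss `Z` under the probability measure `μ`. -/
noncomputable def VaR {Ω : Type*} [MeasurableSpace Ω] (μ : Measure Ω)
    (Z : Ω → ℝ) (s : ℝ) : ℝ :=
  sInf {z : ℝ | s ≤ (μ {ω | Z ω ≤ z}).toReal}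

/-- Expected Shortfall at level `s` of the loss `Z` under `μ`. -/
noncomputable def ES {Ω : Type*} [MeasurableSpace Ω] (μ : Measure Ω)
    (Z : Ω → ℝ) (s : ℝ) : ℝ :=
  (1 - s)⁻¹ * ∫ u in Set.Ioc s 1, VaR μ Z u

open Set Function

theorem measurable_sInf_of_antitone {S : ℝ → Set ℝ} (hS : Antitone S) :
    Measurable fun s => sInf (S s) := by
  set C := {s | (S s).Nonempty ∧ BddBelow (S s)}
  have hC : C.OrdConnected := ⟨fun s hs t ht r hr =>
    ⟨ht.1.mono (hS hr.2), hs.2.mono (hS hr.1)⟩⟩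
  have hmono : MonotoneOn (fun s => sInf (S s)) C := fun s hs t ht hst =>
    csInf_le_csInf hs.2 ht.1 (hS hst)
  -- outside `C` both junk values of `sInf` on `ℝ` are `0`
  have hzero : ∀ s ∉ C, sInf (S s) = 0 := by
    intro s hs
    rcases (S s).eq_empty_or_nonempty with hempty | hne
    · rw [hempty, Real.sInf_empty]
    · exact Real.sInf_of_not_bddBelow fun hbdd => hs ⟨hne, hbdd⟩
  refine measurable_of_restrict_of_restrict_compl hC.measurableSet ?_ ?_
  · exact Monotone.measurable fun s t hst => hmono s.2 t.2 hst
  · rw [show Cᶜ.domRestrict (fun s => sInf (S s)) = fun _ => 0 from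
      funext fun s => hzero s s.2]
    exact measurable_const

theorem measurable_VaR {Ω : Type*} [MeasurableSpace Ω] (μ : Measure Ω) (Z : Ω → ℝ) :
    Measurable (VaR μ Z) :=
  measurable_sInf_of_antitone fun _ _ hst _ hz => hst.trans hz

theorem one_sub_mul_ES {Ω : Type*} [MeasurableSpace Ω] (μ : Measure Ω) (Z : Ω → ℝ) {s : ℝ}
    (hs : s ≠ 1) : (1 - s) * ES μ Z s = ∫ u in Ioc s 1, VaR μ Z u := by
  rw [ES, ← mul_assoc, mul_inv_cancel₀ (sub_ne_zero.2 hs.symm), one_mul]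

namespace StieltjesFunction

variable (f : StieltjesFunction ℝ)

theorem leftLim_ae_eq (μ : Measure ℝ) [NullSingletonClass μ] : leftLim f =ᵐ[μ] f :=
  f.countable_leftLim_ne.ae_notMem μ |>.mono fun _ hx => not_not.1 hx

theorem measureReal_Ioo {a b : ℝ} (hab : a < b) :
    f.measure.real (Ioo a b) = leftLim f b - f a := by
  rw [measureReal_def, f.measure_Ioo, ENNReal.toReal_ofReal (sub_nonneg.2 (f.mono.le_leftLim hab))]

theorem setIntegral_Ioo_indicator_Iio_const {a b u : ℝ} (hu : u ∈ Ioo a b) (c : ℝ) :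
    ∫ s in Ioo a b, (Iio u).indicator (fun _ => c) s ∂f.measure = (leftLim f u - f a) * c := by
  rw [integral_indicator_const _ measurableSet_Iio, measureReal_restrict_apply measurableSet_Iio,
    show Iio u ∩ Ioo a b = Ioo a u by ext; simp only [mem_inter_iff, mem_Iio, mem_Ioo]; grind,
    f.measureReal_Ioo hu.1, smul_eq_mul]

theorem setIntegral_Ioo_indicator_Iio_ae_eq {a b : ℝ} (c : ℝ → ℝ) :
    ∀ᵐ u ∂volume.restrict (Ioo a b),
      ∫ s in Ioo a b, (Iio u).indicator (fun _ => c u) s ∂f.measure = c u * (f u - f a) := by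
  filter_upwards [ae_restrict_mem measurableSet_Ioo, ae_restrict_of_ae (f.leftLim_ae_eq volume)]
    with u hu hlim
  rw [f.setIntegral_Ioo_indicator_Iio_const hu, hlim, mul_comm]

theorem setIntegral_mul_sub_eq_setIntegral_setIntegral_Ioo {a b : ℝ} {g : ℝ → ℝ}
    (hg : AEMeasurable g (volume.restrict (Ioo a b)))
    (hgf : IntegrableOn (fun u => g u * (f u - f a)) (Ioo a b)) :
    ∫ u in Ioo a b, g u * (f u - f a) = ∫ s in Ioo a b, (∫ u in Ioo s b, g u) ∂f.measure := by
  have : IsFiniteMeasure (f.measure.restrict (Ioo a b)) :=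
    isFiniteMeasure_restrict.2 measure_Ioo_lt_top.ne
  set F : ℝ × ℝ → ℝ := {p | p.1 < p.2}.indicator fun p => g p.2
  have hF_meas :
      AEStronglyMeasurable F ((f.measure.restrict (Ioo a b)).prod (volume.restrict (Ioo a b))) :=
    (hg.comp_snd.indicator (measurableSet_lt measurable_fst measurable_snd)).aestronglyMeasurable
  have hF : Integrable F ((f.measure.restrict (Ioo a b)).prod (volume.restrict (Ioo a b))) := by
    refine (integrable_prod_iff' hF_meas).2
      ⟨ae_of_all _ fun u => (integrable_const (g u)).indicator measurableSet_Iio, ?_⟩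
    refine hgf.norm.congr ?_
    filter_upwards [ae_restrict_mem measurableSet_Ioo, f.setIntegral_Ioo_indicator_Iio_ae_eq
      fun u => ‖g u‖] with u hu hsection
    simp only [F, norm_indicator_eq_indicator_norm]
    rw [norm_mul, Real.norm_of_nonneg (sub_nonneg.2 (f.mono hu.1.le))]
    exact hsection.symm
  have hinner : ∀ s ∈ Ioo a b, ∫ u in Ioo a b, F (s, u) = ∫ u in Ioo s b, g u := fun s hs => by
    rw [show (fun u => F (s, u)) = (Ioi s).indicator g from rfl,
      setIntegral_indicator _root_.measurableSet_Ioi,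
      show Ioo a b ∩ Ioi s = Ioo s b by ext; simp only [mem_inter_iff, mem_Ioi, mem_Ioo]; grind]
  calc ∫ u in Ioo a b, g u * (f u - f a)
      = ∫ u in Ioo a b, ∫ s in Ioo a b, F (s, u) ∂f.measure :=
        integral_congr_ae <| (f.setIntegral_Ioo_indicator_Iio_ae_eq g).mono fun _ h => h.symm
    _ = ∫ s in Ioo a b, (∫ u in Ioo a b, F (s, u)) ∂f.measure :=
        (integral_integral_swap (f := fun s u => F (s, u)) hF).symm
    _ = ∫ s in Ioo a b, (∫ u in Ioo s b, g u) ∂f.measure :=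
        setIntegral_congr_fun measurableSet_Ioo hinner

end StieltjesFunction

theorem spectral_as_stieltjes_general {Ω : Type*} [MeasurableSpace Ω] (μ : Measure Ω)
    (Z : Ω → ℝ)
    (h : StieltjesFunction ℝ)
    (h_zero : h 0 = 0)
    (h_int : IntegrableOn (fun s => VaR μ Z s * h s) (Set.Ioo (0 : ℝ) 1)) :
    ∫ s in Set.Ioo (0 : ℝ) 1, VaR μ Z s * h s =
      ∫ s in Set.Ioo (0 : ℝ) 1, (1 - s) * ES μ Z s ∂h.measure := by
  have hES : EqOn (fun s => (1 - s) * ES μ Z s) (fun s => ∫ u in Ioo s 1, VaR μ Z u) (Ioo 0 1) :=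
    fun s hs => (one_sub_mul_ES μ Z hs.2.ne).trans integral_Ioc_eq_integral_Ioo
  rw [setIntegral_congr_fun measurableSet_Ioo hES]
  simpa only [h_zero, sub_zero] using
    h.setIntegral_mul_sub_eq_setIntegral_setIntegral_Ioo (a := 0) (b := 1)
      (measurable_VaR μ Z).aemeasurable (by simpa only [h_zero, sub_zero] using h_int)

/-- A spectral risk measure `ρ_h(Z) = ∫₀¹ VaR_s(Z) h(s) ds` can be written as a
Riemann–Stieltjes integral of `(1-s) ES_s(Z)` against the distortion function `h`. -/
theorem spectral_as_stieltjes {Ω : Type*} [MeasurableSpace Ω] (μ : Measure Ω)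
    [IsProbabilityMeasure μ] (Z : Ω → ℝ) (hZ : Integrable Z μ)
    (h : StieltjesFunction ℝ)
    (h_nonneg : ∀ s ∈ Set.Icc (0 : ℝ) 1, 0 ≤ h s)
    (h_zero : h 0 = 0)
    (h_one : ∫ s in Set.Ioo (0 : ℝ) 1, h s = 1)
    (h_int : IntegrableOn (fun s => VaR μ Z s * h s) (Set.Ioo (0 : ℝ) 1)) :
    ∫ s in Set.Ioo (0 : ℝ) 1, VaR μ Z s * h s =
      ∫ s in Set.Ioo (0 : ℝ) 1, (1 - s) * ES μ Z s ∂h.measure :=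
  spectral_as_stieltjes_general μ Z h h_zero h_int
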